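/- Let G be a finite simple graph, A a nonempty set of vertices of G, and r a nonnegative integer. Suppose V_0,…,V_q are subsets of V(G) with V_0 ∪ … ∪ V_q = V(G), and S_0,…,S_q are sets of vertices with S_i ⊆ V_i for every i, such that: for every vertex v ∈ V(G) there exists i ∈ {0,…,q} with v ∈ V_i and such that for every a ∈ A with dist_G(v,a) ≤ r, there is a shortest (v,a)-path P in G whose maximal prefix contained in V_i intersects S_i (i.e., writing P = p_0 p_1 … p_m with p_0 = v and p_m = a, and letting j be the largest index with {p_0,…,p_j} ⊆ V_i, some p_k with k ≤ j belongs to S_i). Then |Π_{r,G}[V(G) → A]| ≤ Σ_{i=0}^{q} |Π_{r,G[V_i]}[V_i → S_i]|, where G[V_i] denotes the subgraph of G induced by V_i. -/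

import Mathlib

/-!
Put every vertex `v` into a part `Vᵢ` as in the hypothesis. For `a ∈ A` within distance `r`,
cutting a good shortest `(v,a)`-path at its vertex `x ∈ Sᵢ` shows
`dist_G(v,a) = min_{x ∈ Sᵢ} (dist_{G[Vᵢ]}(v,x) + dist_G(x,a))`, the inequality `≥` being the
triangle inequality. So the `r`-profile of `v` on `A` is obtained from its `r`-profile in `G[Vᵢ]`
on `Sᵢ` by a map depending only on `i`, which sends the constant-`∞` profile to itself. Hence
`Π_{r,G}[V(G) → A]` is covered by the images of the `q + 1` sets `Π_{r,G[Vᵢ]}[Vᵢ → Sᵢ]`.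
-/

open SimpleGraph

/-- The profile of `u` on `A` at distance `r`: maps `a ∈ A` to `dist_G(u,a)` if this is
at most `r`, and to `∞` otherwise. -/
noncomputable def SimpleGraph.profile {V : Type*} (G : SimpleGraph V) (r : ℕ) (A : Set V)
    (u : V) : A → ℕ∞ :=
  fun a => if G.edist u (a : V) ≤ r then G.edist u (a : V) else ⊤

/-- `Π_{r,G}[U → A]`: the set of distance-`r` profiles on `A` of vertices of `U`,
excluding the constant-`∞` profile. -/
noncomputable def SimpleGraph.profiles {V : Type*} (G : SimpleGraph V) (r : ℕ) (U A : Set V) :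
    Set (A → ℕ∞) :=
  {f | ∃ u ∈ U, f = G.profile r A u} \ {fun _ => ⊤}

namespace ENat

def cutoff (r : ℕ) (d : ℕ∞) : ℕ∞ := if d ≤ r then d else ⊤

theorem le_cutoff (r : ℕ) (d : ℕ∞) : d ≤ cutoff r d := by
  unfold cutoff
  split_ifs
  exacts [le_rfl, le_top]

theorem cutoff_of_le {r : ℕ} {d : ℕ∞} (h : d ≤ r) : cutoff r d = d := if_pos h

theorem cutoff_of_not_le {r : ℕ} {d : ℕ∞} (h : ¬d ≤ r) : cutoff r d = ⊤ := if_neg h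

@[simp] theorem cutoff_top (r : ℕ) : cutoff r ⊤ = ⊤ := by
  simp [cutoff]

theorem cutoff_iInf_cutoff_add {ι : Type*} (r : ℕ) (e f : ι → ℕ∞) {D : ℕ∞}
    (hlow : ∀ i, D ≤ e i + f i) (hattain : D ≤ r → ∃ i, e i + f i ≤ D) :
    cutoff r (⨅ i, cutoff r (e i) + f i) = cutoff r D := by
  have hge : D ≤ ⨅ i, cutoff r (e i) + f i :=
    le_iInf fun i => (hlow i).trans (add_le_add_left (le_cutoff r (e i)) _)
  by_cases hD : D ≤ r
  · obtain ⟨i, hi⟩ := hattain hD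
    have hei : e i ≤ r := le_self_add.trans (hi.trans hD)
    have hle : ⨅ i, cutoff r (e i) + f i ≤ D :=
      (iInf_le _ i).trans (by rwa [cutoff_of_le hei])
    rw [le_antisymm hle hge]
  · rw [cutoff_of_not_le hD, cutoff_of_not_le fun h => hD (hge.trans h)]

end ENat

namespace SimpleGraph

variable {V W : Type*} {G : SimpleGraph V}

theorem Hom.edist_le {G' : SimpleGraph W} (f : G →g G') (u v : V) :
    G'.edist (f u) (f v) ≤ G.edist u v := by
  by_cases h : G.Reachable u v
  · obtain ⟨p, hp⟩ := h.exists_walk_length_eq_edist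
    rw [← hp, ← p.length_map f]
    exact SimpleGraph.edist_le _
  · rw [edist_eq_top_of_not_reachable h]
    exact le_top

theorem Walk.induce_edist_add_edist_le_length {s : Set V} {v a x : V} (w : G.Walk v a) {n : ℕ}
    (hpre : ∀ y ∈ w.support.take n, y ∈ s) (hx : x ∈ w.support.take n) (hv : v ∈ s)
    (hxs : x ∈ s) :
    (G.induce s).edist ⟨v, hv⟩ ⟨x, hxs⟩ + G.edist x a ≤ w.length := by
  classical
  have hxw : x ∈ w.support := List.mem_of_mem_take hx
  set t := w.takeUntil x hxw
  -- `t` stops at the first visit of `x`, which happens within the first `n` vertices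
  have ht : ∀ y ∈ t.support, y ∈ s := by
    intro y hy
    rw [show t = _ from takeUntil_eq_take w hxw, support_copy, support_take] at hy
    exact hpre y (List.take_subset_take_left _ ((List.mem_take_iff_idxOf_lt hxw).1 hx) hy)
  have hlen := congrArg length (w.take_spec hxw)
  rw [length_append] at hlen
  calc (G.induce s).edist ⟨v, hv⟩ ⟨x, hxs⟩ + G.edist x a
      ≤ (t.induce s ht).length + (w.dropUntil x hxw).length :=
        add_le_add (SimpleGraph.edist_le _) (SimpleGraph.edist_le _)
    _ = w.length := by
      rw [← (t.induce s ht).length_map (Embedding.induce s).toHom, map_induce, ← hlen]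
      rfl

theorem profiles_finite [Finite V] (r : ℕ) (U A : Set V) : (G.profiles r U A).Finite :=
  (Set.finite_range (G.profile r A)).subset fun _ ⟨⟨u, _, hu⟩, _⟩ => ⟨u, hu.symm⟩

/-- Decodes a profile in `G.induce W` on the portals `T` into a profile in `G` on `A`, by
routing through the best portal. -/
noncomputable def liftProfile (G : SimpleGraph V) (r : ℕ) (A : Set V) {W : Set V} (T : Set W)
    (ρ : T → ℕ∞) : A → ℕ∞ :=
  fun a => ENat.cutoff r (⨅ x : T, ρ x + G.edist x.1.1 a)

def ReachesThrough (G : SimpleGraph V) (r : ℕ) (A : Set V) {W : Set V} (T : Set W) (v : W) :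
    Prop :=
  ∀ a ∈ A, G.edist v a ≤ r → ∃ x ∈ T, (G.induce W).edist v x + G.edist x a ≤ G.edist v a

theorem liftProfile_top (r : ℕ) (A : Set V) {W : Set V} (T : Set W) :
    G.liftProfile r A T (fun _ => ⊤) = fun _ => ⊤ := by
  funext a
  simp [liftProfile]

theorem liftProfile_induce_profile (r : ℕ) (A : Set V) {W : Set V} (T : Set W) (u : W)
    (hcut : G.ReachesThrough r A T u) :
    G.liftProfile r A T ((G.induce W).profile r T u) = G.profile r A u := by
  funext a
  refine ENat.cutoff_iInf_cutoff_add r _ _ (fun x => ?_) fun ha => ?_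
  · calc G.edist u a ≤ G.edist u x.1 + G.edist x.1.1 a := G.edist_triangle
      _ ≤ (G.induce W).edist u x + G.edist x.1.1 a :=
        add_le_add_left ((Embedding.induce W).toHom.edist_le u x) _
  · obtain ⟨x, hxT, hx⟩ := hcut a a.2 ha
    exact ⟨⟨x, hxT⟩, hx⟩

theorem profiles_subset_iUnion_image_liftProfile {ι : Type*} (r : ℕ) (A : Set V)
    (W : ι → Set V) (T : ∀ i, Set (W i))
    (hcut : ∀ v, ∃ i, ∃ hv : v ∈ W i, G.ReachesThrough r A (T i) ⟨v, hv⟩) :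
    G.profiles r Set.univ A ⊆
      ⋃ i, G.liftProfile r A (T i) '' (G.induce (W i)).profiles r Set.univ (T i) := by
  rintro _ ⟨⟨v, -, rfl⟩, hv_top⟩
  obtain ⟨i, hv, hcut_v⟩ := hcut v
  have hlift := liftProfile_induce_profile r A (T i) ⟨v, hv⟩ hcut_v
  refine Set.mem_iUnion.2 ⟨i, _, ⟨⟨⟨v, hv⟩, trivial, rfl⟩, fun htop => hv_top ?_⟩, hlift⟩
  rw [← hlift, Set.mem_singleton_iff.1 htop, liftProfile_top]
  rfl

theorem ncard_profiles_le_sum_ncard_induce_profiles [Finite V] {ι : Type*} [Fintype ι] (r : ℕ)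
    (A : Set V) (W : ι → Set V) (T : ∀ i, Set (W i))
    (hcut : ∀ v, ∃ i, ∃ hv : v ∈ W i, G.ReachesThrough r A (T i) ⟨v, hv⟩) :
    (G.profiles r Set.univ A).ncard ≤
      ∑ i, ((G.induce (W i)).profiles r Set.univ (T i)).ncard := by
  have hfin : ∀ i, ((G.induce (W i)).profiles r Set.univ (T i)).Finite :=
    fun i => profiles_finite _ _ _
  calc (G.profiles r Set.univ A).ncard
      ≤ (⋃ i, G.liftProfile r A (T i) '' (G.induce (W i)).profiles r Set.univ (T i)).ncard :=
        Set.ncard_le_ncard (profiles_subset_iUnion_image_liftProfile r A W T hcut)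
          (Set.finite_iUnion fun i => (hfin i).image _)
    _ ≤ ∑ i, (G.liftProfile r A (T i) '' (G.induce (W i)).profiles r Set.univ (T i)).ncard :=
        Set.ncard_iUnion_le_of_fintype _
    _ ≤ ∑ i, ((G.induce (W i)).profiles r Set.univ (T i)).ncard :=
        Finset.sum_le_sum fun i _ => Set.ncard_image_le (hfin i)

end SimpleGraph

theorem covers_and_cuts_general
    {V : Type} [Fintype V] (G : SimpleGraph V) (A : Set V)
    (r q : ℕ) (Vf Sf : Fin (q + 1) → Set V)
    (hsub : ∀ i, Sf i ⊆ Vf i)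
    (hmain : ∀ v : V, ∃ i, v ∈ Vf i ∧ ∀ a ∈ A, G.edist v a ≤ r →
      ∃ w : G.Walk v a, w.length = G.dist v a ∧
        ∃ n ≤ w.support.length, (∀ x ∈ w.support.take n, x ∈ Vf i) ∧
          ∃ x ∈ w.support.take n, x ∈ Sf i) :
    (G.profiles r Set.univ A).ncard ≤
      ∑ i : Fin (q + 1),
        ((G.induce (Vf i)).profiles r Set.univ (Subtype.val ⁻¹' Sf i)).ncard := by
  refine ncard_profiles_le_sum_ncard_induce_profiles r A Vf _ fun v => ?_
  obtain ⟨i, hv, hpaths⟩ := hmain v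
  refine ⟨i, hv, fun a ha har => ?_⟩
  obtain ⟨w, hw, n, -, hpre, x, hx, hxS⟩ := hpaths a ha har
  refine ⟨⟨x, hsub i hxS⟩, hxS, ?_⟩
  calc _ ≤ (w.length : ℕ∞) := w.induce_edist_add_edist_le_length hpre hx hv (hsub i hxS)
    _ = G.edist v a := by rw [hw, w.reachable.coe_dist_eq_edist]

/-- Covers-and-cuts lemma: if `V₀,…,V_q` cover `V(G)`, `Sᵢ ⊆ Vᵢ`, and every vertex `v`
lies in some `Vᵢ` such that for every `a ∈ A` at distance at most `r` there is a shortest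
`(v,a)`-path whose maximal prefix inside `Vᵢ` meets `Sᵢ`, then
`|Π_{r,G}[V(G) → A]| ≤ Σᵢ |Π_{r,G[Vᵢ]}[Vᵢ → Sᵢ]|`. -/
theorem covers_and_cuts
    {V : Type} [Fintype V] (G : SimpleGraph V) (A : Set V) (hA : A.Nonempty)
    (r q : ℕ) (Vf Sf : Fin (q + 1) → Set V)
    (hcover : ⋃ i, Vf i = Set.univ)
    (hsub : ∀ i, Sf i ⊆ Vf i)
    (hmain : ∀ v : V, ∃ i, v ∈ Vf i ∧ ∀ a ∈ A, G.edist v a ≤ r →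
      ∃ w : G.Walk v a, w.length = G.dist v a ∧
        ∃ n ≤ w.support.length, (∀ x ∈ w.support.take n, x ∈ Vf i) ∧
          ∃ x ∈ w.support.take n, x ∈ Sf i) :
    (G.profiles r Set.univ A).ncard ≤
      ∑ i : Fin (q + 1),
        ((G.induce (Vf i)).profiles r Set.univ (Subtype.val ⁻¹' Sf i)).ncard :=
  covers_and_cuts_general G A r q Vf Sf hsub hmain
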